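/- In the missing-labels model with ᾱ = max_{y<m} α^{(y)} < 1, the Jensen–Shannon divergence satisfies d_JS(P, Q) ≤ (1/(1 − ᾱ)) · √(8 · d_JS(P̃, Q̃)). (Corollary 1, eq. (11).) -/

import Mathlib

/-!
On every observed class label `y < m` the channel only rescales both distributions by
`1 - α^{(y)} ≥ 1 - ᾱ`, and the Jensen–Shannon summand is homogeneous of degree one,
so `(1 - ᾱ) · d_JS(P, Q) ≤ d_JS(P̃, Q̃)`; the erased label `m` carries no mass under `P` and `Q`
and contributes a nonnegative amount to `d_JS(P̃, Q̃)`. Since `d_JS(P̃, Q̃) ≤ log 2 < 1`, we also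
have `d_JS(P̃, Q̃) ≤ √(8 · d_JS(P̃, Q̃))`.
-/

open scoped BigOperators
open MeasureTheory

/-- `P` is a probability mass function on `Z`. -/
def IsPMF {Z : Type*} (P : Z → ℝ) : Prop :=
  (∀ z, 0 ≤ P z) ∧ Summable P ∧ ∑' z, P z = 1

/-- Kullback–Leibler divergence of probability mass functions. -/
noncomputable def klDiv {Z : Type*} (P M : Z → ℝ) : ℝ :=
  ∑' z, P z * Real.log (P z / M z)

/-- Jensen–Shannon divergence of probability mass functions. -/
noncomputable def jsDiv {Z : Type*} (P Q : Z → ℝ) : ℝ :=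
  (1 / 2) * klDiv P (fun z => (P z + Q z) / 2) +
    (1 / 2) * klDiv Q (fun z => (P z + Q z) / 2)

/-- The corrupted labeled distribution obtained by passing labels through the channel `C`:
`P̃(x,ỹ) = ∑ j, P(x,j) · C j ỹ`. -/
noncomputable def corrupt {X : Type*} {k : ℕ} (P : X × Fin k → ℝ)
    (C : Matrix (Fin k) (Fin k) ℝ) : X × Fin k → ℝ :=
  fun z => ∑ j, P (z.1, j) * C j z.2

/-- The missing-labels parameter vector on `Fin (m+1)`: `α^{(y)}` on class labels, `0` on
the missing-label symbol `m`. -/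
noncomputable def missAlpha (m : ℕ) (αv : Fin m → ℝ) : Fin (m + 1) → ℝ :=
  fun i => if h : (i : ℕ) < m then αv ⟨i, h⟩ else 0

/-- Confusion matrix of the missing-labels model:
`C = diag(𝟙 − α_m) + α_m e_m^T`. -/
noncomputable def missConfusion (m : ℕ) (αv : Fin m → ℝ) :
    Matrix (Fin (m + 1)) (Fin (m + 1)) ℝ :=
  Matrix.diagonal (fun i => 1 - missAlpha m αv i) +
    Matrix.vecMulVec (missAlpha m αv) (Pi.single (Fin.last m) 1)

open Real

noncomputable def jsSummand (p q : ℝ) : ℝ :=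
  1 / 2 * (p * log (p / ((p + q) / 2))) + 1 / 2 * (q * log (q / ((p + q) / 2)))

section Summand

variable {p q : ℝ}

lemma sub_le_mul_log_div_mid (hp : 0 ≤ p) (hq : 0 ≤ q) :
    p - (p + q) / 2 ≤ p * log (p / ((p + q) / 2)) := by
  rcases hp.eq_or_lt with rfl | hp
  · simp only [zero_mul]; linarith
  have key := one_sub_inv_le_log_of_pos (x := p / ((p + q) / 2)) (by positivity)
  have hpq : p * (1 - (p / ((p + q) / 2))⁻¹) = p - (p + q) / 2 := by field_simp
  rw [← hpq]
  exact mul_le_mul_of_nonneg_left key hp.le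

lemma mul_log_div_mid_le (hp : 0 ≤ p) (hq : 0 ≤ q) :
    p * log (p / ((p + q) / 2)) ≤ p * log 2 := by
  rcases hp.eq_or_lt with rfl | hp
  · simp
  refine mul_le_mul_of_nonneg_left (log_le_log (by positivity) ?_) hp.le
  rw [div_le_iff₀ (by positivity)]
  linarith

lemma abs_mul_log_div_mid_le (hp : 0 ≤ p) (hq : 0 ≤ q) :
    |p * log (p / ((p + q) / 2))| ≤ p + q := by
  have hlog2 : p * log 2 ≤ p := mul_le_of_le_one_right hp (by linarith [log_two_lt_d9])
  rw [abs_le]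
  constructor <;> linarith [sub_le_mul_log_div_mid hp hq, mul_log_div_mid_le hp hq]

lemma jsSummand_nonneg (hp : 0 ≤ p) (hq : 0 ≤ q) : 0 ≤ jsSummand p q := by
  have hP := sub_le_mul_log_div_mid hp hq
  have hQ := sub_le_mul_log_div_mid hq hp
  rw [add_comm q p] at hQ
  unfold jsSummand
  linarith

lemma jsSummand_le (hp : 0 ≤ p) (hq : 0 ≤ q) : jsSummand p q ≤ log 2 * ((p + q) / 2) := by
  have hP := mul_log_div_mid_le hp hq
  have hQ := mul_log_div_mid_le hq hp
  rw [add_comm q p] at hQ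
  unfold jsSummand
  linarith

lemma jsSummand_mul (c p q : ℝ) : jsSummand (c * p) (c * q) = c * jsSummand p q := by
  rcases eq_or_ne c 0 with rfl | hc
  · simp [jsSummand]
  have hmid : ∀ r, c * r / ((c * p + c * q) / 2) = r / ((p + q) / 2) := fun r => by
    rw [← mul_add, mul_div_assoc c (p + q), mul_div_mul_left _ _ hc]
  simp only [jsSummand, hmid]
  ring

end Summand

lemma isPMF_iff_hasSum {Z : Type*} {P : Z → ℝ} : IsPMF P ↔ (∀ z, 0 ≤ P z) ∧ HasSum P 1 :=
  ⟨fun ⟨h0, hs, h1⟩ => ⟨h0, h1 ▸ hs.hasSum⟩, fun ⟨h0, h⟩ => ⟨h0, h.summable, h.tsum_eq⟩⟩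

namespace IsPMF

variable {Z : Type*} {P Q : Z → ℝ}

lemma summable_mul_log_div_mid (hP : IsPMF P) (hQ : IsPMF Q) :
    Summable fun z => P z * log (P z / ((P z + Q z) / 2)) :=
  Summable.of_norm_bounded (hP.2.1.add hQ.2.1) fun z => abs_mul_log_div_mid_le (hP.1 z) (hQ.1 z)

lemma summable_jsSummand (hP : IsPMF P) (hQ : IsPMF Q) :
    Summable fun z => jsSummand (P z) (Q z) := by
  have hPQ := (summable_mul_log_div_mid hP hQ).mul_left (1 / 2)
  have hQP := (summable_mul_log_div_mid hQ hP).mul_left (1 / 2)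
  simp only [add_comm (Q _) (P _)] at hQP
  exact hPQ.add hQP

lemma jsDiv_eq_tsum (hP : IsPMF P) (hQ : IsPMF Q) :
    jsDiv P Q = ∑' z, jsSummand (P z) (Q z) := by
  have hPQ := (summable_mul_log_div_mid hP hQ).mul_left (1 / 2)
  have hQP := (summable_mul_log_div_mid hQ hP).mul_left (1 / 2)
  simp only [add_comm (Q _) (P _)] at hQP
  rw [jsDiv, klDiv, klDiv, ← tsum_mul_left, ← tsum_mul_left, ← hPQ.tsum_add hQP]
  rfl

lemma jsDiv_nonneg (hP : IsPMF P) (hQ : IsPMF Q) : 0 ≤ jsDiv P Q :=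
  jsDiv_eq_tsum hP hQ ▸ tsum_nonneg fun z => jsSummand_nonneg (hP.1 z) (hQ.1 z)

lemma jsDiv_le_log_two (hP : IsPMF P) (hQ : IsPMF Q) : jsDiv P Q ≤ log 2 := by
  have hmid : HasSum (fun z => log 2 * ((P z + Q z) / 2)) (log 2) := by
    have := ((hP.2.1.hasSum.add hQ.2.1.hasSum).div_const 2).mul_left (log 2)
    rwa [hP.2.2, hQ.2.2, one_add_one_eq_two, div_self two_ne_zero, mul_one] at this
  rw [jsDiv_eq_tsum hP hQ, ← hmid.tsum_eq]
  exact (summable_jsSummand hP hQ).tsum_le_tsum (fun z => jsSummand_le (hP.1 z) (hQ.1 z))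
    hmid.summable

lemma mul_jsDiv_le {P' Q' : Z → ℝ} (hP : IsPMF P) (hQ : IsPMF Q) (hP' : IsPMF P')
    (hQ' : IsPMF Q') {c : ℝ} (h : ∀ z, c * jsSummand (P z) (Q z) ≤ jsSummand (P' z) (Q' z)) :
    c * jsDiv P Q ≤ jsDiv P' Q' := by
  rw [jsDiv_eq_tsum hP hQ, jsDiv_eq_tsum hP' hQ', ← tsum_mul_left]
  exact ((summable_jsSummand hP hQ).mul_left c).tsum_le_tsum h (summable_jsSummand hP' hQ')

end IsPMF

lemma hasSum_of_sum_fiber_eq {X ι : Type*} [Fintype ι] {f g : X × ι → ℝ} {a : ℝ}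
    (hf : ∀ z, 0 ≤ f z) (hg : HasSum g a) (hfg : ∀ x, ∑ i, f (x, i) = ∑ i, g (x, i)) :
    HasSum f a := by
  have hg_fiber : HasSum (fun x => ∑ i, f (x, i)) a := by
    simpa only [hfg] using hg.prod_fiberwise fun x => hasSum_fintype _
  have hf_summable : Summable f := (summable_prod_of_nonneg fun z => hf z).2
    ⟨fun _ => .of_finite, by simpa only [tsum_fintype] using hg_fiber.summable⟩
  have hf_fiber := hf_summable.hasSum.prod_fiberwise fun x => hasSum_fintype _
  exact hf_fiber.unique hg_fiber ▸ hf_summable.hasSum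

section Corrupt

variable {X : Type*} {k : ℕ} {P : X × Fin k → ℝ} {C : Matrix (Fin k) (Fin k) ℝ}

lemma corrupt_nonneg (hP : ∀ z, 0 ≤ P z) (hC : C ∈ Matrix.rowStochastic ℝ (Fin k))
    (z : X × Fin k) : 0 ≤ corrupt P C z :=
  Finset.sum_nonneg fun _ _ => mul_nonneg (hP _) (Matrix.nonneg_of_mem_rowStochastic hC)

lemma IsPMF.corrupt (hP : IsPMF P) (hC : C ∈ Matrix.rowStochastic ℝ (Fin k)) :
    IsPMF (_root_.corrupt P C) := by
  rw [isPMF_iff_hasSum] at hP ⊢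
  have hnonneg := corrupt_nonneg hP.1 hC
  refine ⟨hnonneg, hasSum_of_sum_fiber_eq hnonneg hP.2 fun x => ?_⟩
  simp only [_root_.corrupt]
  rw [Finset.sum_comm]
  simp only [← Finset.mul_sum, Matrix.sum_row_of_mem_rowStochastic hC, mul_one]

end Corrupt

section MissingLabels

variable {m : ℕ} {αv : Fin m → ℝ}

lemma missAlpha_nonneg (h0 : ∀ y, 0 ≤ αv y) (i : Fin (m + 1)) : 0 ≤ missAlpha m αv i := by
  unfold missAlpha
  split
  · exact h0 _
  · exact le_rfl

lemma missAlpha_le_one (h1 : ∀ y, αv y ≤ 1) (i : Fin (m + 1)) : missAlpha m αv i ≤ 1 := by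
  unfold missAlpha
  split
  · exact h1 _
  · exact zero_le_one

lemma missAlpha_le_iSup (h0 : ∀ y, 0 ≤ αv y) (i : Fin (m + 1)) :
    missAlpha m αv i ≤ ⨆ y, αv y := by
  unfold missAlpha
  split
  · exact le_ciSup (Set.finite_range αv).bddAbove _
  · exact Real.iSup_nonneg h0

lemma missConfusion_apply (i j : Fin (m + 1)) :
    missConfusion m αv i j =
      (if i = j then 1 - missAlpha m αv i else 0) +
        if j = Fin.last m then missAlpha m αv i else 0 := by
  simp [missConfusion, Matrix.diagonal_apply, Matrix.vecMulVec_apply, Pi.single_apply]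

lemma missConfusion_mem_rowStochastic (h0 : ∀ y, 0 ≤ αv y) (h1 : ∀ y, αv y ≤ 1) :
    missConfusion m αv ∈ Matrix.rowStochastic ℝ (Fin (m + 1)) := by
  rw [Matrix.mem_rowStochastic_iff_sum]
  refine ⟨fun i j => ?_, fun i => ?_⟩
  · have hα0 := missAlpha_nonneg h0 i
    have hα1 := missAlpha_le_one h1 i
    rw [missConfusion_apply]
    split_ifs <;> linarith
  · simp [missConfusion_apply, Finset.sum_add_distrib]

lemma corrupt_missConfusion_of_ne_last {X : Type*} (P : X × Fin (m + 1) → ℝ) (x : X)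
    {y : Fin (m + 1)} (hy : y ≠ Fin.last m) :
    corrupt P (missConfusion m αv) (x, y) = (1 - missAlpha m αv y) * P (x, y) := by
  simp [corrupt, missConfusion_apply, hy, mul_comm]

lemma sub_iSup_mul_jsSummand_le {X : Type*} {P Q : X × Fin (m + 1) → ℝ} (h0 : ∀ y, 0 ≤ αv y)
    (hC : missConfusion m αv ∈ Matrix.rowStochastic ℝ (Fin (m + 1)))
    (hP : ∀ z, 0 ≤ P z) (hQ : ∀ z, 0 ≤ Q z)
    (hPz : ∀ x, P (x, Fin.last m) = 0) (hQz : ∀ x, Q (x, Fin.last m) = 0) (z : X × Fin (m + 1)) :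
    (1 - ⨆ y, αv y) * jsSummand (P z) (Q z) ≤
      jsSummand (corrupt P (missConfusion m αv) z) (corrupt Q (missConfusion m αv) z) := by
  obtain ⟨x, y⟩ := z
  by_cases hy : y = Fin.last m
  · subst hy
    simpa [hPz, hQz, jsSummand] using
      jsSummand_nonneg (corrupt_nonneg hP hC (x, _)) (corrupt_nonneg hQ hC (x, _))
  rw [corrupt_missConfusion_of_ne_last P x hy, corrupt_missConfusion_of_ne_last Q x hy,
    jsSummand_mul]
  exact mul_le_mul_of_nonneg_right (by linarith [missAlpha_le_iSup h0 y])
    (jsSummand_nonneg (hP _) (hQ _))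

end MissingLabels

lemma le_sqrt_mul_self_of_le {t c : ℝ} (ht : 0 ≤ t) (htc : t ≤ c) : t ≤ √(c * t) :=
  Real.le_sqrt_of_sq_le (by nlinarith)

theorem miss_js_bound_general {X : Type*} {m : ℕ} (αv : Fin m → ℝ)
    (hαv0 : ∀ y, 0 ≤ αv y)
    (hbar : (⨆ y, αv y) < 1)
    (P Q : X × Fin (m + 1) → ℝ) (hP : IsPMF P) (hQ : IsPMF Q)
    (hPz : ∀ x : X, P (x, Fin.last m) = 0) (hQz : ∀ x : X, Q (x, Fin.last m) = 0) :
    jsDiv P Q ≤ (1 / (1 - ⨆ y, αv y)) *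
      Real.sqrt (8 * jsDiv (corrupt P (missConfusion m αv)) (corrupt Q (missConfusion m αv))) := by
  have hC : missConfusion m αv ∈ Matrix.rowStochastic ℝ (Fin (m + 1)) :=
    missConfusion_mem_rowStochastic hαv0 fun y =>
      (le_ciSup (Set.finite_range αv).bddAbove y).trans hbar.le
  have hP' := hP.corrupt hC
  have hQ' := hQ.corrupt hC
  have hcontract :=
    hP.mul_jsDiv_le hQ hP' hQ' (sub_iSup_mul_jsSummand_le hαv0 hC hP.1 hQ.1 hPz hQz)
  have hsqrt := le_sqrt_mul_self_of_le (hP'.jsDiv_nonneg hQ')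
    ((hP'.jsDiv_le_log_two hQ').trans (by linarith [log_two_lt_d9]) : _ ≤ (8 : ℝ))
  rw [one_div, ← div_eq_inv_mul, le_div_iff₀ (sub_pos.2 hbar)]
  linarith

theorem miss_js_bound {X : Type*} [Countable X] {m : ℕ} (hm : 0 < m) (αv : Fin m → ℝ)
    (hαv0 : ∀ y, 0 ≤ αv y) (hαv1 : ∀ y, αv y ≤ 1)
    (hbar : (⨆ y, αv y) < 1)
    (P Q : X × Fin (m + 1) → ℝ) (hP : IsPMF P) (hQ : IsPMF Q)
    (hPz : ∀ x : X, P (x, Fin.last m) = 0) (hQz : ∀ x : X, Q (x, Fin.last m) = 0) :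
    jsDiv P Q ≤ (1 / (1 - ⨆ y, αv y)) *
      Real.sqrt (8 * jsDiv (corrupt P (missConfusion m αv)) (corrupt Q (missConfusion m αv))) :=
  miss_js_bound_general αv hαv0 hbar P Q hP hQ hPz hQz
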